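/- arXiv:1112.5647 — 3 statements merged into one kernel-verified Lean document; each statement's English description precedes it below -/
import Mathlib

section
/- Let G=(V,E) be a finite graph of maximum degree 3, let u,v∈V be distinct, and let A∈S_{u,v}(G). Then u and v lie in the same connected component of (V,A); every other connected component containing at least one edge is a cycle; and the component containing u and v has cyclomatic number at most 2. -/
/-!
Write `H` for the graph `(V, A)`. Summing degrees over a component of `H` counts each of its
edges twice, so every component contains an even number of odd-degree vertices. Hence `v` lies in
the component of `u`, and every other component has only even degrees, which are at most 3 and
therefore equal to 2 on a component with an edge: such a component is a cycle. In the component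
of `u`, with `n` vertices, the degree sum is at most `2n + 2`, so it has at most `n + 1` edges,
while a spanning tree of it has `n - 1`; deleting the at most two remaining edges leaves it
acyclic.
-/

open SimpleGraph

variable {V : Type*}

/-- Degree of a vertex `v` in the spanning subgraph `(V, A)`:
the number of edges of `A` incident to `v`. -/
def degIn [DecidableEq V] (A : Finset (Sym2 V)) (v : V) : ℕ :=
  (A.filter fun e => v ∈ e).card

/-- The cyclomatic number of the spanning subgraph `(V, A)`: the minimum number of edges
whose removal from `(V, A)` leaves an acyclic graph. -/
noncomputable def cyclomatic [DecidableEq V] (A : Finset (Sym2 V)) : ℕ :=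
  sInf {k | ∃ B ⊆ A, B.card = k ∧
    (SimpleGraph.fromEdgeSet ((A \ B : Finset (Sym2 V)) : Set (Sym2 V))).IsAcyclic}

open scoped Classical in
/-- The edges of `A` belonging to the connected component of `(V, A)` containing `u`. -/
noncomputable def componentEdges [DecidableEq V] (A : Finset (Sym2 V)) (u : V) :
    Finset (Sym2 V) :=
  A.filter fun e => ∃ x ∈ e, (SimpleGraph.fromEdgeSet (A : Set (Sym2 V))).Reachable u x

namespace SimpleGraph

namespace ConnectedComponent

variable {G : SimpleGraph V} (C : G.ConnectedComponent)

theorem spanningCoe_toSimpleGraph_le : C.toSimpleGraph.spanningCoe ≤ G :=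
  fun _ _ hxy => (C.adj_spanningCoe_toSimpleGraph.1 hxy).2

theorem neighborSet_spanningCoe_toSimpleGraph {x : V} (hx : x ∈ C) :
    C.toSimpleGraph.spanningCoe.neighborSet x = G.neighborSet x := by
  ext y
  simp only [mem_neighborSet, C.adj_spanningCoe_toSimpleGraph]
  exact ⟨And.right, And.intro hx⟩

theorem reachable_spanningCoe_toSimpleGraph_iff {x y : V} (hx : x ∈ C) :
    C.toSimpleGraph.spanningCoe.Reachable x y ↔ G.Reachable x y := by
  refine ⟨fun h => h.mono C.spanningCoe_toSimpleGraph_le, fun h => ?_⟩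
  have hy : y ∈ C := (ConnectedComponent.sound h.symm).trans hx
  exact (C.reachable_toSimpleGraph hx hy).map
    (Embedding.map (Function.Embedding.subtype _) _).toHom

theorem isCycles_spanningCoe_toSimpleGraph (h : ∀ x ∈ C, (G.neighborSet x).ncard = 2) :
    C.toSimpleGraph.spanningCoe.IsCycles := fun x ⟨_, hxy⟩ => by
  have hx := (C.adj_spanningCoe_toSimpleGraph.1 hxy).1
  rw [C.neighborSet_spanningCoe_toSimpleGraph hx]
  exact h x hx

end ConnectedComponent

theorem exists_isCycle_of_ncard_neighborSet_eq_two [Finite V] {G : SimpleGraph V} {w : V}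
    (h : ∀ y, G.Reachable w y → (G.neighborSet y).ncard = 2) :
    ∃ p : G.Walk w w, p.IsCycle ∧ (∀ y, G.Reachable w y ↔ y ∈ p.support) ∧
      ∀ e, e ∈ p.edges ↔ e ∈ G.edgeSet ∧ ∃ x ∈ e, G.Reachable w x := by
  have := Fintype.ofFinite V
  classical
  set C := G.connectedComponentMk w
  set H := C.toSimpleGraph.spanningCoe
  have hHG : H ≤ G := C.spanningCoe_toSimpleGraph_le
  have hmemC : ∀ {y}, y ∈ C ↔ G.Reachable w y := ConnectedComponent.eq.trans reachable_comm
  have hH : H.IsCycles := C.isCycles_spanningCoe_toSimpleGraph fun x hx => h x (hmemC.1 hx)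
  have hw : (H.neighborSet w).Nonempty := by
    refine Set.nonempty_of_ncard_ne_zero ?_
    rw [C.neighborSet_spanningCoe_toSimpleGraph rfl, h w .rfl]
    norm_num
  obtain ⟨q, hq, hverts⟩ :=
    hH.exists_cycle_toSubgraph_verts_eq_connectedComponentSupp (c := H.connectedComponentMk w)
      rfl hw
  have hmemq : ∀ {y}, y ∈ q.toSubgraph.verts ↔ G.Reachable w y := by
    intro y
    rw [hverts, ConnectedComponent.mem_supp_iff, ConnectedComponent.eq, reachable_comm,
      C.reachable_spanningCoe_toSimpleGraph_iff rfl]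
  have hadj : ∀ x y, G.Reachable w x → G.Adj x y → s(x, y) ∈ (q.mapLe hHG).edges := by
    intro x y hx hxy
    rw [Walk.edges_mapLe_eq_edges, ← Walk.mem_edges_toSubgraph, Subgraph.mem_edgeSet]
    refine (hq.adj_toSubgraph_iff_of_isCycles hH (hmemq.2 hx) y).2 ?_
    exact C.adj_spanningCoe_toSimpleGraph.2 ⟨hmemC.2 hx, hxy⟩
  have hsupp : ∀ y, G.Reachable w y ↔ y ∈ (q.mapLe hHG).support := fun y => by
    rw [Walk.support_mapLe_eq_support, ← Walk.mem_verts_toSubgraph, hmemq]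
  refine ⟨q.mapLe hHG, hq.mapLe hHG, hsupp, fun e => ⟨fun he => ?_, ?_⟩⟩
  · refine ⟨Walk.edges_subset_edgeSet _ he, e.out.1, e.out_fst_mem, ?_⟩
    exact (hsupp _).2 (Walk.mem_support_of_mem_edges he e.out_fst_mem)
  · rintro ⟨he, x, hx, hwx⟩
    rw [← Sym2.other_spec hx] at he ⊢
    exact hadj x _ hwx he

theorem card_le_card_edgeSet_add_one_of_reachable [Finite V] {G : SimpleGraph V} {x : V}
    (K : Finset V) (hK : ∀ y ∈ K, G.Reachable x y) : K.card ≤ Nat.card G.edgeSet + 1 := by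
  set C := G.connectedComponentMk x
  have hKC : K.card ≤ Nat.card C := calc
    K.card = (K : Set V).ncard := (Set.ncard_coe_finset K).symm
    _ ≤ (C : Set V).ncard :=
      Set.ncard_le_ncard fun y hy => ConnectedComponent.sound (hK y hy).symm
    _ = Nat.card C := (Nat.card_coe_set_eq _).symm
  have hCG : Nat.card C.toSimpleGraph.edgeSet ≤ Nat.card G.edgeSet :=
    Nat.card_le_card_of_injective _
      (Hom.mapEdgeSet.injective C.toSimpleGraph_hom Subtype.val_injective)
  have := C.connected_toSimpleGraph.card_vert_le_card_edgeSet_add_one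
  omega

end SimpleGraph

theorem Finset.sum_le_two_mul_card_add_two {f : V → ℕ} (K : Finset V) {u v : V}
    (h3 : ∀ y, f y ≤ 3) (heven : ∀ y, y ≠ u → y ≠ v → Even (f y)) :
    ∑ y ∈ K, f y ≤ 2 * K.card + 2 := by
  classical
  calc ∑ y ∈ K, f y
        ≤ ∑ y ∈ K, (2 + (if y = u then 1 else 0) + (if y = v then 1 else 0)) := by
        refine Finset.sum_le_sum fun y _ => ?_
        have := h3 y
        by_cases hyu : y = u
        · rw [if_pos hyu]; omega
        by_cases hyv : y = v
        · rw [if_pos hyv]; omega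
        have := Nat.even_iff.1 (heven y hyu hyv)
        rw [if_neg hyu, if_neg hyv]; omega
    _ ≤ 2 * K.card + 2 := by
        rw [Finset.sum_add_distrib, Finset.sum_add_distrib, Finset.sum_const, Finset.sum_ite_eq',
          Finset.sum_ite_eq', smul_eq_mul]
        split_ifs <;> omega

section EdgeSet

variable {A : Finset (Sym2 V)}

theorem edgeSet_fromEdgeSet_of_not_isDiag (hA : ∀ e ∈ A, ¬ e.IsDiag) :
    (fromEdgeSet (A : Set (Sym2 V))).edgeSet = A :=
  (edgeSet_eq_iff _ _).2 ⟨rfl, Set.disjoint_left.2 hA⟩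

theorem reachable_of_mem_of_mem {r x y : V} {e : Sym2 V} (he : e ∈ A) (hx : x ∈ e)
    (hy : y ∈ e) (hrx : (fromEdgeSet (A : Set (Sym2 V))).Reachable r x) :
    (fromEdgeSet (A : Set (Sym2 V))).Reachable r y := by
  obtain rfl | hxy := eq_or_ne x y
  · exact hrx
  rw [(Sym2.mem_and_mem_iff hxy).1 ⟨hx, hy⟩] at he
  exact hrx.trans ((fromEdgeSet_adj _).2 ⟨he, hxy⟩).reachable

variable [DecidableEq V]

theorem degIn_eq_degree (hA : ∀ e ∈ A, ¬ e.IsDiag) (w : V)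
    [Fintype ((fromEdgeSet (A : Set (Sym2 V))).neighborSet w)] :
    degIn A w = (fromEdgeSet (A : Set (Sym2 V))).degree w := by
  rw [← card_incidenceFinset_eq_degree, degIn]
  congr 1
  ext e
  simp [incidenceSet, edgeSet_fromEdgeSet_of_not_isDiag hA]

theorem ncard_neighborSet_eq_degIn [Finite V] (hA : ∀ e ∈ A, ¬ e.IsDiag) (w : V) :
    ((fromEdgeSet (A : Set (Sym2 V))).neighborSet w).ncard = degIn A w := by
  have := Fintype.ofFinite V
  classical
  rw [degIn_eq_degree hA, ← card_neighborSet_eq_degree, Set.ncard_eq_toFinset_card',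
    Set.toFinset_card]

theorem degIn_le_degree {G : SimpleGraph V} [Fintype V] [DecidableRel G.Adj]
    (hA : A ⊆ G.edgeFinset) (w : V) : degIn A w ≤ G.degree w := by
  rw [← card_incidenceFinset_eq_degree, degIn]
  refine Finset.card_le_card fun e he => ?_
  rw [Finset.mem_filter] at he
  exact (mem_incidenceFinset _ _ _).2 ⟨mem_edgeFinset.1 (hA he.1), he.2⟩

theorem degIn_ne_zero_of_reachable {w y : V} (hw : degIn A w ≠ 0)
    (hwy : (fromEdgeSet (A : Set (Sym2 V))).Reachable w y) : degIn A y ≠ 0 := by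
  obtain rfl | hne := eq_or_ne y w
  · exact hw
  obtain ⟨p⟩ := hwy.symm
  have hadj := p.adj_snd (Walk.not_nil_of_ne hne)
  exact Finset.card_ne_zero.2
    ⟨_, Finset.mem_filter.2 ⟨((fromEdgeSet_adj _).1 hadj).1, Sym2.mem_mk_left _ _⟩⟩

theorem sum_degIn_eq_two_mul_card [Fintype V] (hA : ∀ e ∈ A, ¬ e.IsDiag) :
    ∑ w, degIn A w = 2 * A.card := by
  classical
  simp_rw [degIn_eq_degree hA]
  rw [sum_degrees_eq_twice_card_edges]
  congr 2
  ext e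
  simp [edgeSet_fromEdgeSet_of_not_isDiag hA]

theorem mem_componentEdges {r : V} {e : Sym2 V} :
    e ∈ componentEdges A r ↔
      e ∈ A ∧ ∃ x ∈ e, (fromEdgeSet (A : Set (Sym2 V))).Reachable r x := by
  classical
  rw [componentEdges, Finset.mem_filter]

theorem degIn_componentEdges (r w : V)
    [Decidable ((fromEdgeSet (A : Set (Sym2 V))).Reachable r w)] :
    degIn (componentEdges A r) w =
      if (fromEdgeSet (A : Set (Sym2 V))).Reachable r w then degIn A w else 0 := by
  unfold degIn
  split_ifs with hrw
  · congr 1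
    ext e
    simp only [Finset.mem_filter, mem_componentEdges]
    exact ⟨fun ⟨⟨he, _⟩, hw⟩ => ⟨he, hw⟩,
      fun ⟨he, hw⟩ => ⟨⟨he, w, hw, hrw⟩, hw⟩⟩
  · refine Finset.card_eq_zero.2 (Finset.filter_eq_empty_iff.2 fun e he hw => hrw ?_)
    obtain ⟨he, x, hx, hrx⟩ := mem_componentEdges.1 he
    exact reachable_of_mem_of_mem he hx hw hrx

theorem sum_degIn_reachable [Fintype V] (hA : ∀ e ∈ A, ¬ e.IsDiag) (r : V) :
    ∑ w with (fromEdgeSet (A : Set (Sym2 V))).Reachable r w, degIn A w =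
      2 * (componentEdges A r).card := by
  have hC : ∀ e ∈ componentEdges A r, ¬ e.IsDiag := fun e he =>
    hA e (mem_componentEdges.1 he).1
  rw [← sum_degIn_eq_two_mul_card hC, Finset.sum_filter]
  simp only [degIn_componentEdges]

theorem reachable_fromEdgeSet_componentEdges {r y : V}
    (h : (fromEdgeSet (A : Set (Sym2 V))).Reachable r y) :
    (fromEdgeSet (componentEdges A r : Set (Sym2 V))).Reachable r y := by
  suffices ∀ {x} (q : (fromEdgeSet (A : Set (Sym2 V))).Walk x y),
      (fromEdgeSet (A : Set (Sym2 V))).Reachable r x →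
      (fromEdgeSet (componentEdges A r : Set (Sym2 V))).Reachable x y from
    h.elim fun p => this p .rfl
  clear h
  intro x q
  induction q with
  | nil => exact fun _ => .rfl
  | @cons x z y hxz q ih =>
    intro hrx
    obtain ⟨he, hne⟩ := (fromEdgeSet_adj _).1 hxz
    have hxz' : (fromEdgeSet (componentEdges A r : Set (Sym2 V))).Adj x z :=
      (fromEdgeSet_adj _).2 ⟨mem_componentEdges.2 ⟨he, x, Sym2.mem_mk_left x z, hrx⟩, hne⟩
    exact hxz'.reachable.trans (ih (hrx.trans hxz.reachable))

theorem cyclomatic_add_card_le [Fintype V] (D : Finset (Sym2 V)) {x : V}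
    (K : Finset V) (hK : ∀ y ∈ K, (fromEdgeSet (D : Set (Sym2 V))).Reachable x y) :
    cyclomatic D + K.card ≤ D.card + 1 := by
  classical
  obtain ⟨F, hFle, hF, hFreach⟩ :=
    (fromEdgeSet (D : Set (Sym2 V))).exists_isAcyclic_reachable_eq_le
  have hFD : F.edgeFinset ⊆ D := fun e he => by
    have := edgeSet_mono hFle (mem_edgeFinset.1 he)
    rw [edgeSet_fromEdgeSet] at this
    exact this.1
  have hcyc : cyclomatic D ≤ (D \ F.edgeFinset).card := by
    refine Nat.sInf_le ⟨_, Finset.sdiff_subset, rfl, ?_⟩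
    rwa [Finset.sdiff_sdiff_eq_self hFD, coe_edgeFinset, fromEdgeSet_edgeSet]
  have hK := card_le_card_edgeSet_add_one_of_reachable K fun y hy => hFreach ▸ hK y hy
  rw [Nat.card_eq_fintype_card, ← edgeFinset_card] at hK
  have := Finset.card_sdiff_add_card_eq_card hFD
  omega

theorem reachable_of_odd_degIn [Fintype V] (hA : ∀ e ∈ A, ¬ e.IsDiag) {u v : V}
    (hu : Odd (degIn A u)) (heven : ∀ w, w ≠ u → w ≠ v → Even (degIn A w)) :
    (fromEdgeSet (A : Set (Sym2 V))).Reachable u v := by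
  by_contra huv
  have hsum := sum_degIn_reachable hA u
  rw [← Finset.add_sum_erase _ _ (Finset.mem_filter.2 ⟨Finset.mem_univ _, .rfl⟩)] at hsum
  have htail : Even (∑ w ∈ ({w | (fromEdgeSet (A : Set (Sym2 V))).Reachable u w} :
      Finset V).erase u, degIn A w) := by
    refine Finset.even_sum _ fun w hw => ?_
    obtain ⟨hwu, hw⟩ := Finset.mem_erase.1 hw
    exact heven w hwu (by rintro rfl; exact huv (Finset.mem_filter.1 hw).2)
  exact Nat.not_even_iff_odd.2 hu ((Nat.even_add.1 (hsum ▸ even_two_mul _)).2 htail)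

theorem exists_isCycle_of_even_degIn [Fintype V] (hA : ∀ e ∈ A, ¬ e.IsDiag)
    (h3 : ∀ y, degIn A y ≤ 3) {w : V} (hw : degIn A w ≠ 0)
    (heven : ∀ y, (fromEdgeSet (A : Set (Sym2 V))).Reachable w y → Even (degIn A y)) :
    ∃ c : (fromEdgeSet (A : Set (Sym2 V))).Walk w w, c.IsCycle ∧
      (∀ y, (fromEdgeSet (A : Set (Sym2 V))).Reachable w y ↔ y ∈ c.support) ∧
      c.edges.toFinset = componentEdges A w := by
  have h2 : ∀ y, (fromEdgeSet (A : Set (Sym2 V))).Reachable w y → degIn A y = 2 := by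
    intro y hy
    have := h3 y
    have := degIn_ne_zero_of_reachable hw hy
    have := Nat.even_iff.1 (heven y hy)
    omega
  obtain ⟨c, hc, hsupp, hedges⟩ := exists_isCycle_of_ncard_neighborSet_eq_two fun y hy =>
    (ncard_neighborSet_eq_degIn hA y).trans (h2 y hy)
  refine ⟨c, hc, hsupp, ?_⟩
  ext e
  rw [List.mem_toFinset, hedges, edgeSet_fromEdgeSet_of_not_isDiag hA, mem_componentEdges]
  rfl

theorem cyclomatic_componentEdges_le_two [Fintype V] (hA : ∀ e ∈ A, ¬ e.IsDiag)
    (h3 : ∀ y, degIn A y ≤ 3) {u v : V}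
    (heven : ∀ w, w ≠ u → w ≠ v → Even (degIn A w)) :
    cyclomatic (componentEdges A u) ≤ 2 := by
  have hcyc := cyclomatic_add_card_le (componentEdges A u)
    {y | (fromEdgeSet (A : Set (Sym2 V))).Reachable u y}
    fun y hy => reachable_fromEdgeSet_componentEdges (Finset.mem_filter.1 hy).2
  have hsum := sum_degIn_reachable hA u
  have hle := Finset.sum_le_two_mul_card_add_two
    {y | (fromEdgeSet (A : Set (Sym2 V))).Reachable u y} h3 heven
  omega

end EdgeSet

theorem suv_component_structure_general
    [Fintype V] [DecidableEq V] (G : SimpleGraph V) [DecidableRel G.Adj]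
    (hdeg : ∀ w, G.degree w ≤ 3)
    (u v : V)
    (A : Finset (Sym2 V)) (hA : A ⊆ G.edgeFinset)
    (hu : Odd (degIn A u))
    (heven : ∀ w, w ≠ u → w ≠ v → Even (degIn A w)) :
    (SimpleGraph.fromEdgeSet (A : Set (Sym2 V))).Reachable u v ∧
    (∀ w, ¬ (SimpleGraph.fromEdgeSet (A : Set (Sym2 V))).Reachable u w → degIn A w ≠ 0 →
      ∃ c : (SimpleGraph.fromEdgeSet (A : Set (Sym2 V))).Walk w w, c.IsCycle ∧
        (∀ y, (SimpleGraph.fromEdgeSet (A : Set (Sym2 V))).Reachable w y ↔ y ∈ c.support) ∧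
        c.edges.toFinset = componentEdges A w) ∧
    cyclomatic (componentEdges A u) ≤ 2 := by
  have hnd : ∀ e ∈ A, ¬ e.IsDiag := fun e he =>
    G.not_isDiag_of_mem_edgeSet (mem_edgeFinset.1 (hA he))
  have h3 : ∀ w, degIn A w ≤ 3 := fun w => (degIn_le_degree hA w).trans (hdeg w)
  have huv := reachable_of_odd_degIn hnd hu heven
  refine ⟨huv, fun w hw hw0 => exists_isCycle_of_even_degIn hnd h3 hw0 fun y hwy => ?_,
    cyclomatic_componentEdges_le_two hnd h3 heven⟩
  exact heven y (by rintro rfl; exact hw hwy.symm) (by rintro rfl; exact hw (huv.trans hwy.symm))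

/-- Let `G = (V, E)` be a finite graph of maximum degree 3, `u ≠ v`, and `A ∈ S_{u,v}(G)`
(i.e. exactly `u` and `v` have odd degree in `(V, A)`).  Then `u` and `v` lie in the same
connected component of `(V, A)`; every other connected component containing at least one
edge is a cycle; and the component containing `u` and `v` has cyclomatic number at most 2. -/
theorem suv_component_structure
    [Fintype V] [DecidableEq V] (G : SimpleGraph V) [DecidableRel G.Adj]
    (hdeg : ∀ w, G.degree w ≤ 3)
    (u v : V) (huv : u ≠ v)
    (A : Finset (Sym2 V)) (hA : A ⊆ G.edgeFinset)
    (hu : Odd (degIn A u)) (hv : Odd (degIn A v))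
    (heven : ∀ w, w ≠ u → w ≠ v → Even (degIn A w)) :
    (SimpleGraph.fromEdgeSet (A : Set (Sym2 V))).Reachable u v ∧
    (∀ w, ¬ (SimpleGraph.fromEdgeSet (A : Set (Sym2 V))).Reachable u w → degIn A w ≠ 0 →
      ∃ c : (SimpleGraph.fromEdgeSet (A : Set (Sym2 V))).Walk w w, c.IsCycle ∧
        (∀ y, (SimpleGraph.fromEdgeSet (A : Set (Sym2 V))).Reachable w y ↔ y ∈ c.support) ∧
        c.edges.toFinset = componentEdges A w) ∧
    cyclomatic (componentEdges A u) ≤ 2 :=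
  suv_component_structure_general G hdeg u v A hA hu heven
end

section
/- Let G=(V,E) be a finite graph of maximum degree 3, let n be a positive integer, let x be a real number, and let u,v∈V be distinct. If the spins (s_i)_{i∈V} are i.i.d. with the face-cubic a priori measure, then E[ (s_u·s_v) ∏_{ij∈E}(1 + n x s_i·s_j) ] = Σ_{A∈S_{u,v}(G)} x^{|A|} n^{c(A)}. -/
open SimpleGraph

variable {V : Type*}

/-- `A ∈ S_{u,v}(G)`: exactly `u` and `v` have odd degree in `(V, A)` (for `u ≠ v`);
for `u = v` this says that all degrees are even. -/
def inSuv [DecidableEq V] (A : Finset (Sym2 V)) (u v : V) : Prop :=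
  ∀ w, Odd (degIn A w) ↔ (u ≠ v ∧ (w = u ∨ w = v))

/-- The face-cubic spin associated to a pair `(α, ±)`: the unit vector `± e_α ∈ ℝⁿ`.
The face-cubic a priori measure is the uniform distribution on these `2n` vectors. -/
def fcSpin (n : ℕ) (p : Fin n × Bool) : Fin n → ℝ :=
  Pi.single p.1 (if p.2 then 1 else -1)


/-! Writing `s_i = ±e_{α_i}` one has `s_i · s_j = [α_i = α_j] ε_i ε_j`, so after expanding
`∏ (1 + n x s_i · s_j)` over the edge sets `A ⊆ E`, the expectation of each term factorises
into a colour sum over `α ∈ (Fin n)^V` and a sign sum over `ε ∈ {±1}^V`. The sign sum is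
`2^|V|` if every vertex has even degree in `A + uv`, i.e. `A ∈ S_{u,v}`, and vanishes
otherwise. For such `A`, the handshake lemma applied to the component of `u` shows that `v` lies
in it, so the colour sum counts the colourings that are constant on components: `n^{k(A)}`.
Comparing with a spanning forest of `(V, A)` gives `|A| + k(A) = c(A) + |V|`. -/

open Finset

namespace SimpleGraph

variable {G : SimpleGraph V} {a b x y : V}

lemma reachable_sup_edge_iff :
    (G ⊔ edge a b).Reachable x y ↔
      G.Reachable x y ∨ (G.Reachable x a ∧ G.Reachable b y) ∨
        (G.Reachable x b ∧ G.Reachable a y) := by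
  constructor
  · rintro ⟨p⟩
    induction p with
    | nil => exact .inl .rfl
    | cons h _ ih =>
      rcases h with h | h
      · have h := h.reachable
        rcases ih with h' | ⟨h₁, h₂⟩ | ⟨h₁, h₂⟩
        exacts [.inl (h.trans h'), .inr (.inl ⟨h.trans h₁, h₂⟩), .inr (.inr ⟨h.trans h₁, h₂⟩)]
      · obtain ⟨⟨rfl, rfl⟩ | ⟨rfl, rfl⟩, -⟩ := (edge_adj ..).mp h
        · rcases ih with h' | ⟨h₁, h₂⟩ | ⟨-, h₂⟩
          exacts [.inr (.inl ⟨.rfl, h'⟩), .inl (h₁.symm.trans h₂), .inl h₂]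
        · rcases ih with h' | ⟨-, h₂⟩ | ⟨h₁, h₂⟩
          exacts [.inr (.inr ⟨.rfl, h'⟩), .inl h₂, .inl (h₁.symm.trans h₂)]
  · have hab : (G ⊔ edge a b).Reachable a b := by
      rcases eq_or_ne a b with rfl | hne
      · rfl
      · exact Adj.reachable (.inr (by simp [edge_adj, hne]))
    have hle {u w : V} : G.Reachable u w → (G ⊔ edge a b).Reachable u w :=
      Reachable.mono le_sup_left
    rintro (h | ⟨h₁, h₂⟩ | ⟨h₁, h₂⟩)
    · exact hle h
    · exact ((hle h₁).trans hab).trans (hle h₂)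
    · exact ((hle h₁).trans hab.symm).trans (hle h₂)

/-- The components of `G ⊔ edge a b` are those of `G`, with the components of `a` and `b`
merged; so off the component of `b` the induced map is a bijection. -/
lemma card_connectedComponent_sup_edge_of_not_reachable [Finite V] (h : ¬G.Reachable a b) :
    Nat.card (G ⊔ edge a b).ConnectedComponent + 1 = Nat.card G.ConnectedComponent := by
  classical
  let f := ConnectedComponent.map (Hom.ofLE (le_sup_left : G ≤ G ⊔ edge a b))
  have hf : Function.Bijective
      fun c : {c : G.ConnectedComponent // c ≠ G.connectedComponentMk b} => f c := by
    refine ⟨fun ⟨c, hc⟩ ⟨c', hc'⟩ hcc => ?_, fun d => ?_⟩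
    · induction c using ConnectedComponent.ind
      induction c' using ConnectedComponent.ind
      simp only [f, ConnectedComponent.map_mk, Hom.coe_ofLE, id_eq,
        ConnectedComponent.eq, Subtype.mk.injEq, ne_eq] at hcc hc hc' ⊢
      grind [reachable_sup_edge_iff, Reachable.symm]
    · induction d using ConnectedComponent.ind with | h z => ?_
      by_cases hz : G.Reachable z b
      · refine ⟨⟨G.connectedComponentMk a, by simpa using h⟩, ?_⟩
        simp only [f, ConnectedComponent.map_mk, Hom.coe_ofLE, id_eq, ConnectedComponent.eq]
        exact reachable_sup_edge_iff.mpr (.inr (.inl ⟨.rfl, hz.symm⟩))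
      · exact ⟨⟨G.connectedComponentMk z, by simpa using hz⟩, rfl⟩
  have := Fintype.ofFinite G.ConnectedComponent
  rw [← Nat.card_eq_of_bijective _ hf, Nat.card_eq_fintype_card, Nat.card_eq_fintype_card,
    Fintype.card_subtype_compl, Fintype.card_subtype_eq,
    Nat.sub_add_cancel (Fintype.card_pos_iff.mpr ⟨G.connectedComponentMk b⟩)]

lemma card_connectedComponent_bot :
    Nat.card (⊥ : SimpleGraph V).ConnectedComponent = Nat.card V :=
  (Nat.card_eq_of_bijective _ ⟨fun _ _ h => reachable_bot.mp (ConnectedComponent.exact h),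
    Quot.mk_surjective⟩).symm

lemma card_connectedComponent_eq_of_reachable_eq {H : SimpleGraph V}
    (h : G.Reachable = H.Reachable) :
    Nat.card G.ConnectedComponent = Nat.card H.ConnectedComponent := by
  unfold ConnectedComponent
  rw [h]

lemma fromEdgeSet_insert (e : Sym2 V) (s : Set (Sym2 V)) :
    fromEdgeSet (insert e s) = fromEdgeSet s ⊔ fromEdgeSet {e} := by
  rw [Set.insert_eq, fromEdgeSet_union, sup_comm]

lemma card_add_card_connectedComponent_of_isAcyclic [Finite V] (A : Finset (Sym2 V))
    (hA : ∀ e ∈ A, ¬e.IsDiag) (hacyc : (fromEdgeSet (A : Set (Sym2 V))).IsAcyclic) :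
    #A + Nat.card (fromEdgeSet (A : Set (Sym2 V))).ConnectedComponent = Nat.card V := by
  classical
  induction A using Finset.induction_on with
  | empty => simpa using card_connectedComponent_bot
  | @insert e A he ih =>
    induction e with | h a b => ?_
    have hab : a ≠ b := by simpa using hA _ (mem_insert_self _ _)
    rw [coe_insert, fromEdgeSet_insert, ← edge, isAcyclic_sup_fromEdgeSet_iff] at hacyc
    have hnr : ¬(fromEdgeSet (A : Set (Sym2 V))).Reachable a b := fun h => by
      rcases hacyc.2 h with h | h
      exacts [hab h, he ((fromEdgeSet_adj _).mp h).1]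
    rw [coe_insert, fromEdgeSet_insert, ← edge, card_insert_of_notMem he,
      ← ih (fun e he => hA e (mem_insert_of_mem he)) hacyc.1,
      ← card_connectedComponent_sup_edge_of_not_reachable hnr]
    ring

lemma Reachable.eq_of_forall_adj {β : Type*} {f : V → β} (hf : ∀ x y, G.Adj x y → f x = f y)
    (h : G.Reachable x y) : f x = f y := by
  obtain ⟨p⟩ := h
  induction p with
  | nil => rfl
  | cons hadj _ ih => exact (hf _ _ hadj).trans ih

def ConnectedComponent.liftEquiv (β : Type*) (G : SimpleGraph V) :
    {f : V → β // ∀ x y, G.Adj x y → f x = f y} ≃ (G.ConnectedComponent → β) where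
  toFun f := ConnectedComponent.lift f.1 fun _ _ p _ => Reachable.eq_of_forall_adj f.2 ⟨p⟩
  invFun g := ⟨g ∘ G.connectedComponentMk,
    fun _ _ h => congrArg g (ConnectedComponent.sound h.reachable)⟩
  left_inv _ := rfl
  right_inv _ := funext fun c => c.ind fun _ => rfl

lemma natCard_forall_adj_eq [Finite V] (β : Type*) (G : SimpleGraph V) :
    Nat.card {f : V → β // ∀ x y, G.Adj x y → f x = f y}
      = Nat.card β ^ Nat.card G.ConnectedComponent := by
  have : Finite G.ConnectedComponent := Quot.finite _
  rw [Nat.card_congr (ConnectedComponent.liftEquiv β G), Nat.card_fun]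

end SimpleGraph

open SimpleGraph

/-- The minimum in `cyclomatic A` is attained by removing the complement of a spanning forest. -/
lemma cyclomatic_add_card [Finite V] [DecidableEq V] (A : Finset (Sym2 V))
    (hA : ∀ e ∈ A, ¬e.IsDiag) :
    cyclomatic A + Nat.card V
      = #A + Nat.card (fromEdgeSet (A : Set (Sym2 V))).ConnectedComponent := by
  classical
  obtain ⟨F, hFA, hF, hreach⟩ := (fromEdgeSet (A : Set (Sym2 V))).exists_isAcyclic_reachable_eq_le
  set C := A.filter (· ∈ F.edgeSet)
  have hCA : C ⊆ A := filter_subset _ A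
  have hC : fromEdgeSet (C : Set (Sym2 V)) = F := by
    ext x y
    simp only [C, fromEdgeSet_adj, coe_filter, Set.mem_ofPred_eq, mem_edgeSet]
    exact ⟨fun h => h.1.2, fun h => ⟨⟨((fromEdgeSet_adj _).mp (hFA h)).1, h⟩, h.ne⟩⟩
  have hforest := card_add_card_connectedComponent_of_isAcyclic C (fun e he => hA e (hCA he))
    (hC ▸ hF)
  rw [hC, card_connectedComponent_eq_of_reachable_eq hreach] at hforest
  have hleast : IsLeast {k | ∃ B ⊆ A, #B = k ∧
      (fromEdgeSet ((A \ B : Finset (Sym2 V)) : Set (Sym2 V))).IsAcyclic} #(A \ C) := by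
    refine ⟨⟨A \ C, sdiff_subset, rfl, by rwa [Finset.sdiff_sdiff_eq_self hCA, hC]⟩, ?_⟩
    rintro k ⟨B, hBA, rfl, hB⟩
    have hforest' := card_add_card_connectedComponent_of_isAcyclic (A \ B)
      (fun e he => hA e (sdiff_subset he)) hB
    have hcomp := ConnectedComponent.card_le_card_of_le
      (fromEdgeSet_mono (coe_subset.mpr (sdiff_subset : A \ B ⊆ A)))
    have := card_sdiff_of_subset hBA
    have := card_sdiff_of_subset hCA
    have := card_le_card hBA
    omega
  rw [cyclomatic, hleast.csInf_eq, card_sdiff_of_subset hCA]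
  have := card_le_card hCA
  omega

section Parity

variable [DecidableEq V] {A : Finset (Sym2 V)}

lemma even_sum_degIn_of_closed (hA : ∀ e ∈ A, ¬e.IsDiag) {C : Finset V}
    (hC : ∀ e ∈ A, ∀ x ∈ e, ∀ y ∈ e, x ∈ C → y ∈ C) : Even (∑ w ∈ C, degIn A w) := by
  have hswap : ∑ w ∈ C, degIn A w = ∑ e ∈ A, #(C.filter (· ∈ e)) :=
    sum_card_bipartiteAbove_eq_sum_card_bipartiteBelow _
  rw [hswap]
  refine Finset.even_sum _ fun e he => ?_
  by_cases hx : ∃ x ∈ e, x ∈ C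
  · obtain ⟨x, hxe, hxC⟩ := hx
    have : C.filter (· ∈ e) = e.toFinset := by
      ext y
      simpa using fun hy => hC e he x hxe y hy hxC
    rw [this, Sym2.card_toFinset_of_not_isDiag _ (hA e he)]
    exact even_two
  · rw [filter_eq_empty_iff.mpr fun y hyC hye => hx ⟨y, hye, hyC⟩, card_empty]
    exact .zero

lemma reachable_of_inSuv [Fintype V] (hA : ∀ e ∈ A, ¬e.IsDiag) {u v : V} (h : inSuv A u v) :
    (fromEdgeSet (A : Set (Sym2 V))).Reachable u v := by
  by_contra hnr
  have huv : u ≠ v := fun h => hnr (h ▸ .rfl)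
  let C := univ.filter ((fromEdgeSet (A : Set (Sym2 V))).Reachable u)
  have hu : u ∈ C := by simp [C]
  have hC : ∀ e ∈ A, ∀ x ∈ e, ∀ y ∈ e, x ∈ C → y ∈ C := by
    intro e he x hx y hy hxC
    simp only [C, mem_filter, mem_univ, true_and] at hxC ⊢
    rcases eq_or_ne x y with rfl | hxy
    · exact hxC
    · rw [(Sym2.mem_and_mem_iff hxy).mp ⟨hx, hy⟩] at he
      exact hxC.trans (Adj.reachable ((fromEdgeSet_adj _).mpr ⟨he, hxy⟩))
  have hodd : Odd (∑ w ∈ C, degIn A w) := by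
    rw [← add_sum_erase _ _ hu]
    refine ((h u).mpr ⟨huv, .inl rfl⟩).add_even (Finset.even_sum _ fun w hw => ?_)
    rw [← Nat.not_odd_iff_even, h w]
    rintro ⟨-, rfl | rfl⟩
    · simp at hw
    · simp [C, hnr] at hw
  exact Nat.not_even_iff_odd.mpr hodd (even_sum_degIn_of_closed hA hC)

lemma inSuv_iff_forall_even {u v : V} :
    inSuv A u v ↔
      ∀ w, Even (degIn A w + (if w = u then 1 else 0) + (if w = v then 1 else 0)) := by
  refine forall_congr' fun w => ?_
  rcases eq_or_ne w u with rfl | hwu <;> rcases eq_or_ne w v with rfl | hwv <;>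
    simp_all [Nat.even_add_one, parity_simps, eq_comm]

end Parity

def boolSign (b : Bool) : ℝ := if b then 1 else -1

lemma sum_boolSign_pow (d : ℕ) : ∑ b, boolSign b ^ d = if Even d then 2 else 0 := by
  rcases Nat.even_or_odd d with h | h
  · simp [boolSign, h, h.neg_one_pow, one_add_one_eq_two]
  · simp [boolSign, h.neg_one_pow, Nat.not_even_iff_odd.mpr h]

lemma sum_prod_boolSign_pow [Fintype V] [DecidableEq V] (d : V → ℕ) :
    ∑ ε : V → Bool, ∏ w, boolSign (ε w) ^ d w
      = if ∀ w, Even (d w) then 2 ^ Fintype.card V else 0 := by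
  rw [← Fintype.prod_sum fun w b => boolSign b ^ d w]
  simp_rw [sum_boolSign_pow, Fintype.prod_ite_zero, prod_const, card_univ]

def edgeSign (ε : V → Bool) : Sym2 V → ℝ :=
  Sym2.lift ⟨fun i j => boolSign (ε i) * boolSign (ε j), fun _ _ => mul_comm _ _⟩

lemma edgeSign_eq_prod_toFinset [DecidableEq V] (ε : V → Bool) {e : Sym2 V} (he : ¬e.IsDiag) :
    edgeSign ε e = ∏ w ∈ e.toFinset, boolSign (ε w) := by
  induction e with | h i j => ?_
  rw [Sym2.toFinset_mk_eq, prod_pair (by simpa using he)]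
  rfl

lemma prod_edgeSign [Fintype V] [DecidableEq V] (ε : V → Bool) {A : Finset (Sym2 V)}
    (hA : ∀ e ∈ A, ¬e.IsDiag) :
    ∏ e ∈ A, edgeSign ε e = ∏ w, boolSign (ε w) ^ degIn A w := by
  rw [prod_congr rfl fun e he => edgeSign_eq_prod_toFinset ε (hA e he),
    prod_comm' (t' := univ) (s' := fun w => A.filter (w ∈ ·)) (by simp [and_comm])]
  simp [degIn]

open scoped Classical in
lemma sum_edgeSign_mul_prod [Fintype V] [DecidableEq V] {A : Finset (Sym2 V)}
    (hA : ∀ e ∈ A, ¬e.IsDiag) (u v : V) :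
    ∑ ε : V → Bool, edgeSign ε s(u, v) * ∏ e ∈ A, edgeSign ε e
      = if inSuv A u v then 2 ^ Fintype.card V else 0 := by
  have h (ε : V → Bool) : edgeSign ε s(u, v) * ∏ e ∈ A, edgeSign ε e
      = ∏ w, boolSign (ε w) ^
          (degIn A w + (if w = u then 1 else 0) + (if w = v then 1 else 0)) := by
    simp only [pow_add, prod_mul_distrib, pow_ite, pow_one, pow_zero, prod_ite_eq', mem_univ,
      if_true, prod_edgeSign ε hA]
    rw [edgeSign, Sym2.lift_mk]
    ring
  simp_rw [h, sum_prod_boolSign_pow, inSuv_iff_forall_even]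

def edgeColorDelta {α : Type*} [DecidableEq α] (τ : V → α) (e : Sym2 V) : ℝ :=
  if (e.map τ).IsDiag then 1 else 0

lemma forall_isDiag_map_iff {α : Type*} (τ : V → α) (A : Set (Sym2 V)) :
    (∀ e ∈ A, (e.map τ).IsDiag) ↔ ∀ x y, (fromEdgeSet A).Adj x y → τ x = τ y := by
  refine ⟨fun h x y hxy => (h _ ((fromEdgeSet_adj _).mp hxy).1), fun h e he => ?_⟩
  induction e with | h x y => ?_
  rcases eq_or_ne x y with rfl | hxy
  · simp
  · simpa using h x y ((fromEdgeSet_adj _).mpr ⟨he, hxy⟩)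

lemma sum_edgeColorDelta_mul_prod [Fintype V] [DecidableEq V] {α : Type*} [Fintype α]
    [DecidableEq α] {A : Finset (Sym2 V)} {u v : V}
    (huv : (fromEdgeSet (A : Set (Sym2 V))).Reachable u v) :
    ∑ τ : V → α, edgeColorDelta τ s(u, v) * ∏ e ∈ A, edgeColorDelta τ e
      = Fintype.card α ^ Nat.card (fromEdgeSet (A : Set (Sym2 V))).ConnectedComponent := by
  classical
  have h (τ : V → α) : edgeColorDelta τ s(u, v) * ∏ e ∈ A, edgeColorDelta τ e
      = if ∀ x y, (fromEdgeSet (A : Set (Sym2 V))).Adj x y → τ x = τ y then 1 else 0 := by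
    by_cases hτ : ∀ x y, (fromEdgeSet (A : Set (Sym2 V))).Adj x y → τ x = τ y
    · have hA : ∀ e ∈ A, (e.map τ).IsDiag := (forall_isDiag_map_iff τ _).mpr hτ
      have huv' : (s(u, v).map τ).IsDiag := by simpa using huv.eq_of_forall_adj hτ
      simp only [edgeColorDelta, prod_boole, if_pos hτ, if_pos hA, if_pos huv', mul_one]
    · have hA : ¬∀ e ∈ A, (e.map τ).IsDiag := mt (forall_isDiag_map_iff τ _).mp hτ
      simp only [edgeColorDelta, prod_boole, if_neg hτ, if_neg hA, mul_zero]
  simp_rw [h, sum_boole, ← Fintype.card_subtype, ← Nat.card_eq_fintype_card,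
    natCard_forall_adj_eq]
  simp

lemma Fintype.sum_arrow_prod_mul {ι α β R : Type*} [Fintype ι] [DecidableEq ι] [Fintype α]
    [Fintype β] [CommSemiring R] (f : (ι → α) → R) (g : (ι → β) → R) :
    ∑ σ : ι → α × β, f (fun i => (σ i).1) * g (fun i => (σ i).2) = (∑ τ, f τ) * ∑ ε, g ε := by
  rw [sum_mul_sum, ← Fintype.sum_prod_type']
  exact Fintype.sum_equiv (Equiv.arrowProdEquivProdArrow _ _ _) _ _ fun _ => rfl

lemma fcSpin_dot {n : ℕ} (σ : V → Fin n × Bool) (i j : V) :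
    ∑ α, fcSpin n (σ i) α * fcSpin n (σ j) α
      = edgeColorDelta (fun w => (σ w).1) s(i, j) * edgeSign (fun w => (σ w).2) s(i, j) := by
  rw [Fintype.sum_eq_single (σ i).1 fun α hα => by simp [fcSpin, hα]]
  by_cases h : (σ i).1 = (σ j).1 <;> simp [fcSpin, edgeColorDelta, edgeSign, boolSign, h]

lemma two_point_mul_prod_one_add_eq_sum_powerset {n : ℕ} (σ : V → Fin n × Bool)
    (E : Finset (Sym2 V)) (c : ℝ) (u v : V) (h) :
    (∑ α, fcSpin n (σ u) α * fcSpin n (σ v) α) *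
        ∏ e ∈ E, Sym2.lift ⟨fun i j => 1 + c * ∑ α, fcSpin n (σ i) α * fcSpin n (σ j) α, h⟩ e
      = ∑ A ∈ E.powerset, c ^ #A *
          ((edgeColorDelta (fun w => (σ w).1) s(u, v) *
              ∏ e ∈ A, edgeColorDelta (fun w => (σ w).1) e) *
            (edgeSign (fun w => (σ w).2) s(u, v) * ∏ e ∈ A, edgeSign (fun w => (σ w).2) e)) := by
  have hlift (e : Sym2 V) :
      Sym2.lift ⟨fun i j => 1 + c * ∑ α, fcSpin n (σ i) α * fcSpin n (σ j) α, h⟩ e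
        = 1 + c * (edgeColorDelta (fun w => (σ w).1) e * edgeSign (fun w => (σ w).2) e) := by
    induction e with | h i j => exact congrArg (1 + c * ·) (fcSpin_dot σ i j)
  rw [prod_congr rfl fun e _ => hlift e, fcSpin_dot, prod_one_add, mul_sum]
  refine sum_congr rfl fun A _ => ?_
  simp only [prod_mul_distrib, prod_const]
  ring

open scoped Classical in
/-- Let `G = (V, E)` be a finite graph of maximum degree 3, `n` a positive integer, `x`
real, and `u ≠ v` vertices.  If the spins `(s_i)_{i ∈ V}` are i.i.d. with the face-cubic
a priori measure, then
`E[(s_u · s_v) ∏_{ij ∈ E} (1 + n x s_i · s_j)] = Σ_{A ∈ S_{u,v}(G)} x^{|A|} n^{c(A)}`. -/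
theorem face_cubic_two_point_expansion
    [Fintype V] [DecidableEq V] (G : SimpleGraph V) [DecidableRel G.Adj]
    (n : ℕ) (hn : 0 < n) (x : ℝ) (u v : V) :
    (1 / (2 * n : ℝ)) ^ Fintype.card V *
      ∑ σ : V → Fin n × Bool,
        (∑ α, fcSpin n (σ u) α * fcSpin n (σ v) α) *
        ∏ e ∈ G.edgeFinset,
          Sym2.lift ⟨fun i j => 1 + (n : ℝ) * x * ∑ α, fcSpin n (σ i) α * fcSpin n (σ j) α,
            fun i j => by simp [mul_comm]⟩ e
      = ∑ A ∈ G.edgeFinset.powerset.filter (fun A => inSuv A u v),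
          x ^ A.card * (n : ℝ) ^ cyclomatic A := by
  rw [sum_congr rfl fun σ _ => two_point_mul_prod_one_add_eq_sum_powerset σ _ _ u v _, sum_comm,
    mul_sum, sum_filter]
  refine sum_congr rfl fun A hA => ?_
  have hdiag : ∀ e ∈ A, ¬e.IsDiag := fun e he =>
    G.not_isDiag_of_mem_edgeSet (mem_edgeFinset.mp (mem_powerset.mp hA he))
  rw [← mul_sum, Fintype.sum_arrow_prod_mul
    (fun τ => edgeColorDelta τ s(u, v) * ∏ e ∈ A, edgeColorDelta τ e)
    (fun ε => edgeSign ε s(u, v) * ∏ e ∈ A, edgeSign ε e), sum_edgeSign_mul_prod hdiag]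
  split_ifs with hSuv
  · rw [sum_edgeColorDelta_mul_prod (reachable_of_inSuv hdiag hSuv), Fintype.card_fin]
    have hc := cyclomatic_add_card A hdiag
    rw [Nat.card_eq_fintype_card] at hc
    have hpow : (n : ℝ) ^ #A * n ^ Nat.card (fromEdgeSet (A : Set (Sym2 V))).ConnectedComponent
        = n ^ cyclomatic A * n ^ Fintype.card V := by
      rw [← pow_add, ← pow_add, hc]
    have hn' : (n : ℝ) ≠ 0 := by positivity
    rw [mul_pow, div_pow, one_pow, mul_pow]
    field_simp
    linear_combination x ^ #A * hpow
  · simp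
end

section
/- The girth of the hydrogen-peroxide lattice is 10: every cycle in the lattice has length at least 10, and there exists a cycle of length exactly 10. -/
/-- One directed step of the hydrogen-peroxide lattice: from `p` to `q` along a positive
coordinate direction, allowed according to the parity conditions defining
`E_x`, `E_y`, `E_z`. -/
def hpStep (p q : ℤ × ℤ × ℤ) : Prop :=
  (q = (p.1 + 1, p.2.1, p.2.2) ∧ (p.2.2 + p.1) % 2 = 0) ∨
  (q = (p.1, p.2.1 + 1, p.2.2) ∧ (p.1 + p.2.1) % 2 = 0) ∨
  (q = (p.1, p.2.1, p.2.2 + 1) ∧ (p.2.1 + p.2.2) % 2 = 0)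

/-- The hydrogen-peroxide lattice: the graph with vertex set `ℤ³` and edge set
`E_x ∪ E_y ∪ E_z`, where
`E_x = {(x,y,z)(x+1,y,z) : z + x ≡ 0 mod 2}`,
`E_y = {(x,y,z)(x,y+1,z) : x + y ≡ 0 mod 2}`,
`E_z = {(x,y,z)(x,y,z+1) : y + z ≡ 0 mod 2}`. -/
def hpLattice : SimpleGraph (ℤ × ℤ × ℤ) where
  Adj p q := hpStep p q ∨ hpStep q p
  symm := ⟨fun p q h => h.symm⟩
  loopless := ⟨by
    rintro ⟨x, y, z⟩ (h | h) <;>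
      rcases h with ⟨h, -⟩ | ⟨h, -⟩ | ⟨h, -⟩ <;> simp [Prod.ext_iff] at h⟩

/-!
Every vertex has exactly one neighbour along each axis, and translations by `2ℤ³` are graph
automorphisms. A cycle of length `n` through `p` is an edge `p v` followed by a path of length
`n - 1` from `v` back to `p` whose first step does not return to `p`; so it suffices that from
each of the eight vertices of `{0,1}³` no non-backtracking walk of length at most `8` leads from
a neighbour back, which a bounded search confirms. A cycle of length `10` is given explicitly.
-/

open SimpleGraph Function

section NonbacktrackingSearch

variable {V : Type*} [DecidableEq V] (nbrs : V → List V)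

/-- Whether some walk of length between `1` and `k` along `nbrs` leads from `c` to `s` without
ever stepping straight back, `prev` counting as the vertex visited just before `c`. -/
def reachesNonbacktracking (s : V) : V → V → ℕ → Bool
  | _, _, 0 => false
  | c, prev, k + 1 =>
    (nbrs c).any fun w => !decide (w = prev) && (decide (w = s) || reachesNonbacktracking s w c k)

variable {nbrs}

theorem reachesNonbacktracking_map {f : V → V} (hf : Injective f)
    (hnbrs : ∀ a, nbrs (f a) = (nbrs a).map f) (s : V) :
    ∀ k c prev, reachesNonbacktracking nbrs (f s) (f c) (f prev) k =
      reachesNonbacktracking nbrs s c prev k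
  | 0, _, _ => rfl
  | k + 1, c, prev => by
    simp only [reachesNonbacktracking, hnbrs, List.any_map, comp_def, hf.eq_iff,
      reachesNonbacktracking_map hf hnbrs s k]

theorem SimpleGraph.Walk.IsPath.reachesNonbacktracking_eq_true {G : SimpleGraph V}
    (hnbrs : ∀ a b, G.Adj a b → b ∈ nbrs a) {a s : V} {w : G.Walk a s} (hw : w.IsPath)
    (hne : ¬ w.Nil) {prev : V} (hprev : prev ≠ w.getVert 1) {k : ℕ} (hk : w.length ≤ k) :
    reachesNonbacktracking nbrs s a prev k = true := by
  induction w generalizing k prev with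
  | nil => exact absurd Walk.Nil.nil hne
  | @cons a b s h w ih =>
    obtain ⟨k, rfl⟩ : ∃ k', k = k' + 1 := ⟨k - 1, by simp at hk; omega⟩
    have hb : b ≠ prev := by simpa using hprev.symm
    rw [reachesNonbacktracking, List.any_eq_true]
    refine ⟨b, hnbrs a b h, ?_⟩
    simp only [hb, decide_false, Bool.not_false, Bool.true_and, Bool.or_eq_true,
      decide_eq_true_eq]
    by_cases hnil : w.Nil
    · exact Or.inl hnil.eq
    · refine Or.inr (ih hw.of_cons hnil ?_ (by simpa using hk))
      intro ha
      exact ((cons_isPath_iff h w).mp hw).2 (ha ▸ w.getVert_mem_support 1)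

theorem SimpleGraph.Walk.IsCycle.add_two_le_length_of_reachesNonbacktracking_eq_false
    {G : SimpleGraph V} (hnbrs : ∀ a b, G.Adj a b → b ∈ nbrs a) {k : ℕ}
    (hreach : ∀ p, ∀ v ∈ nbrs p, reachesNonbacktracking nbrs p v p k = false)
    {p : V} {c : G.Walk p p} (hc : c.IsCycle) : k + 2 ≤ c.length := by
  cases c with
  | nil => exact absurd hc not_isCycle_nil
  | @cons _ v _ h q =>
    have hq : q.IsPath := ((cons_isCycle_iff q h).mp hc).1
    have hlen : 2 ≤ q.length := by simpa using hc.three_le_length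
    have hstart : p ≠ q.getVert 1 := by
      intro h1
      have := hq.getVert_injOn (by simp; omega) (by simp) (h1.symm.trans q.getVert_length.symm)
      omega
    by_contra! hk
    have := hq.reachesNonbacktracking_eq_true hnbrs
      (by simp [Walk.not_nil_iff_lt_length]; omega) hstart (k := k) (by simp at hk; omega)
    simp [hreach p v (hnbrs p v h)] at this

end NonbacktrackingSearch

def hpNeighbors (p : ℤ × ℤ × ℤ) : List (ℤ × ℤ × ℤ) :=
  [if (p.2.2 + p.1) % 2 = 0 then (p.1 + 1, p.2.1, p.2.2) else (p.1 - 1, p.2.1, p.2.2),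
   if (p.1 + p.2.1) % 2 = 0 then (p.1, p.2.1 + 1, p.2.2) else (p.1, p.2.1 - 1, p.2.2),
   if (p.2.1 + p.2.2) % 2 = 0 then (p.1, p.2.1, p.2.2 + 1) else (p.1, p.2.1, p.2.2 - 1)]

theorem mem_hpNeighbors_of_adj {a b : ℤ × ℤ × ℤ} (h : hpLattice.Adj a b) :
    b ∈ hpNeighbors a := by
  rcases h with (⟨rfl, _⟩ | ⟨rfl, _⟩ | ⟨rfl, _⟩) | (⟨rfl, _⟩ | ⟨rfl, _⟩ | ⟨rfl, _⟩) <;>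
    simp only [hpNeighbors, List.mem_cons, List.not_mem_nil, or_false, Prod.ext_iff] <;>
    split_ifs <;> simp <;> omega

theorem hpNeighbors_add_two_smul (a d : ℤ × ℤ × ℤ) :
    hpNeighbors (a + 2 • d) = (hpNeighbors a).map (· + 2 • d) := by
  obtain ⟨a1, a2, a3⟩ := a
  obtain ⟨d1, d2, d3⟩ := d
  simp only [hpNeighbors, Prod.smul_mk, Prod.mk_add_mk, List.map_cons, List.map_nil,
    nsmul_eq_mul, Nat.cast_ofNat]
  refine congrArg₂ _ ?_ (congrArg₂ _ ?_ (congrArg₂ _ ?_ rfl)) <;> split_ifs <;>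
    simp only [Prod.mk_add_mk, Prod.mk.injEq, and_true, true_and] <;> omega

theorem reachesNonbacktracking_hpNeighbors_unitCube :
    ∀ x ∈ [0, 1], ∀ y ∈ [0, 1], ∀ z ∈ [0, 1], ∀ v ∈ hpNeighbors (x, y, z),
      reachesNonbacktracking hpNeighbors (x, y, z) v (x, y, z) 8 = false := by
  decide +kernel

theorem reachesNonbacktracking_hpNeighbors_eq_false (p : ℤ × ℤ × ℤ) :
    ∀ v ∈ hpNeighbors p, reachesNonbacktracking hpNeighbors p v p 8 = false := by
  obtain ⟨x, y, z⟩ := p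
  have hp : ((x, y, z) : ℤ × ℤ × ℤ) =
      (x % 2, y % 2, z % 2) + 2 • (x / 2, y / 2, z / 2) := by
    simp only [Prod.smul_mk, Prod.mk_add_mk, nsmul_eq_mul, Nat.cast_ofNat, Int.emod_add_mul_ediv]
  rw [hp, hpNeighbors_add_two_smul]
  intro v hv
  obtain ⟨u, hu, rfl⟩ := List.mem_map.mp hv
  rw [reachesNonbacktracking_map (add_left_injective _) (fun a => hpNeighbors_add_two_smul a _)]
  exact reachesNonbacktracking_hpNeighbors_unitCube _ (by simp; omega) _ (by simp; omega) _
    (by simp; omega) u hu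

instance : DecidableRel hpStep := fun _ _ => inferInstanceAs (Decidable (_ ∨ _ ∨ _))

instance : DecidableRel hpLattice.Adj := fun p q =>
  inferInstanceAs (Decidable (hpStep p q ∨ hpStep q p))

def hpTenCycle : hpLattice.Walk (0, 0, 0) (0, 0, 0) :=
  .cons (v := (1, 0, 0)) (by decide) <| .cons (v := (1, -1, 0)) (by decide) <|
  .cons (v := (0, -1, 0)) (by decide) <| .cons (v := (0, -2, 0)) (by decide) <|
  .cons (v := (0, -2, 1)) (by decide) <| .cons (v := (0, -1, 1)) (by decide) <|
  .cons (v := (-1, -1, 1)) (by decide) <| .cons (v := (-1, 0, 1)) (by decide) <|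
  .cons (v := (0, 0, 1)) (by decide) <| .cons (by decide) .nil

theorem hpTenCycle_isCycle : hpTenCycle.IsCycle := by
  rw [Walk.isCycle_def, Walk.isTrail_def]
  exact ⟨by decide, by simp [hpTenCycle], by decide⟩

/-- The girth of the hydrogen-peroxide lattice is 10: every cycle in the lattice has
length at least 10, and there exists a cycle of length exactly 10. -/
theorem hpLattice_girth_eq_ten :
    (∀ (p : ℤ × ℤ × ℤ) (c : hpLattice.Walk p p), c.IsCycle → 10 ≤ c.length) ∧
    (∃ (p : ℤ × ℤ × ℤ) (c : hpLattice.Walk p p), c.IsCycle ∧ c.length = 10) :=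
  ⟨fun _ _ hc => hc.add_two_le_length_of_reachesNonbacktracking_eq_false
      (fun _ _ => mem_hpNeighbors_of_adj) reachesNonbacktracking_hpNeighbors_eq_false,
    _, hpTenCycle, hpTenCycle_isCycle, rfl⟩
end
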